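/- Let $B$ be a continuous random field on $\mathcal S^N$ such that for every $K>0$ there is an a.s. finite random constant $C_K$ with $\sup_{f\in\mathcal L^{2K}(\mathcal S^N)}\lambda(\{x:|B(x)-f(x)|\le\epsilon\})\le C_K\,\epsilon$ for all $\epsilon\in(0,1)$. Assume each difference $B_m-B_{m'}$ ($m\ne m'$) of a vector field $B=(B_1,\dots,B_M)$ satisfies this property. Then the map $\phi^\omega$ of the continuum Schelling model, restricted to $\mathcal L^K_M(\mathcal S^N)$, is a.s. Lipschitz continuous for the supremum norm, with Lipschitz constant at most $2M(M-1)C_K$. -/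

import Mathlib

open MeasureTheory

/-- The plurality function: `plur v = some m` iff `v m` is the unique strict maximum of `v`. -/
noncomputable def plur {M : ℕ} (v : Fin M → ℝ) : Option (Fin M) :=
  if h : ∃ m, ∀ m', m' ≠ m → v m' < v m then some h.choose else none

/-- The class `𝓛^K` on the torus: sup norm at most `K·2^N` and coordinatewise Lipschitz
constant at most `K·2^{N-1}`. -/
def MemLKTorus (N : ℕ) (R : ℝ) [Fact (0 < R)] (K : ℝ)
    (f : (Fin N → AddCircle R) → ℝ) : Prop :=
  (∀ x, |f x| ≤ K * 2 ^ N) ∧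
  ∀ k : Fin N, ∀ x x' : Fin N → AddCircle R, (∀ j, j ≠ k → x j = x' j) →
    |f x - f x'| ≤ K * 2 ^ (N - 1) * ‖x k - x' k‖

/-! If the plurality winner at `x'` is `m` for `B + y` but not for `B + ỹ` (or vice versa), then
for some `m' ≠ m` the gap `B_m - B_{m'}` lies between `y_{m'} - y_m` and `ỹ_{m'} - ỹ_m`. These two
functions belong to the convex class `𝓛^{2K}` and are `2δ`-close, so the occupation-density
hypothesis bounds the measure of that band by `C_K δ`. The two integrands of `φ` differ, by `1`,
only on the union of these `M - 1` bands, so `|φ(y)_m(x) - φ(ỹ)_m(x)| ≤ (M - 1) C_K δ`. -/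

open Set

lemma plur_eq_some_iff {M : ℕ} (v : Fin M → ℝ) (m : Fin M) :
    plur v = some m ↔ ∀ m', m' ≠ m → v m' < v m := by
  unfold plur
  split_ifs with h
  · refine ⟨fun hm => Option.some_inj.1 hm ▸ h.choose_spec, fun hm => ?_⟩
    by_contra hne
    exact lt_asymm (h.choose_spec m fun e => hne (congrArg some e.symm))
      (hm _ fun e => hne (congrArg some e))
  · exact ⟨nofun, fun hm => absurd ⟨m, hm⟩ h⟩

lemma measurableSet_plur_eq_some {α : Type*} [MeasurableSpace α] {M : ℕ} {v : α → Fin M → ℝ}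
    (hv : Measurable v) (m : Fin M) : MeasurableSet {x | plur (v x) = some m} := by
  simp_rw [plur_eq_some_iff, ofPred_forall]
  exact .iInter fun m' => .iInter fun _ => measurableSet_lt hv.eval hv.eval

lemma exists_sub_mem_uIcc_of_plur {M : ℕ} {u v w : Fin M → ℝ} {m : Fin M}
    (hv : plur (fun i => u i + v i) = some m) (hw : plur (fun i => u i + w i) ≠ some m) :
    ∃ m' ≠ m, u m - u m' ∈ uIcc (v m' - v m) (w m' - w m) := by
  rw [plur_eq_some_iff] at hv
  rw [Ne, plur_eq_some_iff] at hw
  push Not at hw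
  obtain ⟨m', hm', hle⟩ := hw
  exact ⟨m', hm', mem_uIcc.2 (Or.inl ⟨by linarith [hv m' hm'], by linarith⟩)⟩

lemma setOf_not_iff_plur_subset {α : Type*} {M : ℕ} (u v w : α → Fin M → ℝ) (m : Fin M) :
    {x | ¬(plur (fun i => u x i + v x i) = some m ↔ plur (fun i => u x i + w x i) = some m)}
      ⊆ ⋃ m' ∈ Finset.univ.erase m,
          {x | u x m - u x m' ∈ uIcc (v x m' - v x m) (w x m' - w x m)} := by
  intro x hx
  obtain ⟨m', hm', hmem⟩ : ∃ m' ≠ m, u x m - u x m' ∈ uIcc (v x m' - v x m) (w x m' - w x m) := by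
    by_cases hv : plur (fun i => u x i + v x i) = some m
    · exact exists_sub_mem_uIcc_of_plur hv fun hw => hx (iff_of_true hv hw)
    · have hw : plur (fun i => u x i + w x i) = some m :=
        by_contra fun hw => hx (iff_of_false hv hw)
      obtain ⟨m', hm', hmem⟩ := exists_sub_mem_uIcc_of_plur hw hv
      exact ⟨m', hm', (uIcc_comm _ _).subset hmem⟩
  exact mem_biUnion (Finset.mem_erase.2 ⟨hm', Finset.mem_univ _⟩) hmem

namespace MemLKTorus

variable {N : ℕ} {R : ℝ} [Fact (0 < R)] {K : ℝ} {f : (Fin N → AddCircle R) → ℝ}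

lemma abs_sub_le_sum (hf : MemLKTorus N R K f) (s : Finset (Fin N))
    (x x' : Fin N → AddCircle R) (hxx' : ∀ j ∉ s, x j = x' j) :
    |f x - f x'| ≤ ∑ k ∈ s, K * 2 ^ (N - 1) * ‖x k - x' k‖ := by
  classical
  induction s using Finset.induction_on generalizing x with
  | empty => simp [funext fun j => hxx' j (Finset.notMem_empty j)]
  | insert k s hk ih =>
    set x'' := Function.update x k (x' k)
    have hstep : |f x - f x''| ≤ K * 2 ^ (N - 1) * ‖x k - x' k‖ := by
      simpa [x''] using hf.2 k x x'' fun j hj => (Function.update_of_ne hj _ _).symm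
    have hrest := ih x'' fun j hj => by
      by_cases hjk : j = k
      · simp [x'', hjk]
      · simpa [x'', hjk] using hxx' j (by simp [hjk, hj])
    have hsum : ∑ j ∈ s, K * 2 ^ (N - 1) * ‖x'' j - x' j‖
        = ∑ j ∈ s, K * 2 ^ (N - 1) * ‖x j - x' j‖ :=
      Finset.sum_congr rfl fun j hj => by
        rw [show x'' j = x j from Function.update_of_ne (ne_of_mem_of_not_mem hj hk) _ _]
    rw [Finset.sum_insert hk]
    calc |f x - f x'| ≤ |f x - f x''| + |f x'' - f x'| := abs_sub_le _ _ _
      _ ≤ _ := add_le_add hstep (hsum ▸ hrest)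

lemma nonneg (hf : MemLKTorus N R K f) : 0 ≤ K :=
  nonneg_of_mul_nonneg_left ((abs_nonneg _).trans (hf.1 0)) (by positivity)

lemma continuous (hf : MemLKTorus N R K f) : Continuous f := by
  have hK := hf.nonneg
  refine (LipschitzWith.of_dist_le_mul (K := Real.toNNReal (N * (K * 2 ^ (N - 1)))) ?_).continuous
  intro a b
  rw [Real.dist_eq, Real.coe_toNNReal _ (by positivity)]
  calc |f a - f b| ≤ ∑ k, K * 2 ^ (N - 1) * ‖a k - b k‖ :=
        hf.abs_sub_le_sum _ a b fun j hj => absurd (Finset.mem_univ j) hj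
    _ ≤ ∑ _k : Fin N, K * 2 ^ (N - 1) * dist a b := by
        gcongr with k
        exact (dist_eq_norm (a k) (b k)).symm.trans_le (dist_le_pi_dist a b k)
    _ = N * (K * 2 ^ (N - 1)) * dist a b := by
        rw [Finset.sum_const, Finset.card_univ, Fintype.card_fin, nsmul_eq_mul]; ring

lemma sub {K' : ℝ} {g : (Fin N → AddCircle R) → ℝ} (hf : MemLKTorus N R K f)
    (hg : MemLKTorus N R K' g) : MemLKTorus N R (K + K') (f - g) := by
  refine ⟨fun x => ?_, fun k x x' hxx' => ?_⟩
  · calc |f x - g x| ≤ |f x| + |g x| := abs_sub _ _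
      _ ≤ K * 2 ^ N + K' * 2 ^ N := add_le_add (hf.1 x) (hg.1 x)
      _ = (K + K') * 2 ^ N := by ring
  · calc |(f x - g x) - (f x' - g x')| = |(f x - f x') - (g x - g x')| := by ring_nf
      _ ≤ |f x - f x'| + |g x - g x'| := abs_sub _ _
      _ ≤ K * 2 ^ (N - 1) * ‖x k - x' k‖ + K' * 2 ^ (N - 1) * ‖x k - x' k‖ :=
          add_le_add (hf.2 k x x' hxx') (hg.2 k x x' hxx')
      _ = (K + K') * 2 ^ (N - 1) * ‖x k - x' k‖ := by ring

end MemLKTorus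

lemma convex_setOf_memLKTorus (N : ℕ) (R : ℝ) [Fact (0 < R)] (K : ℝ) :
    Convex ℝ {f | MemLKTorus N R K f} := by
  intro f hf g hg a b ha hb hab
  have hball : ∀ {u v C : ℝ}, |u| ≤ C → |v| ≤ C → |a * u + b * v| ≤ C := fun hu hv =>
    abs_le.2 (convex_Icc _ _ (abs_le.1 hu) (abs_le.1 hv) ha hb hab)
  refine ⟨fun x => hball (hf.1 x) (hg.1 x), fun k x x' hxx' => ?_⟩
  calc |(a * f x + b * g x) - (a * f x' + b * g x')|
      = |a * (f x - f x') + b * (g x - g x')| := by ring_nf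
    _ ≤ _ := hball (hf.2 k x x' hxx') (hg.2 k x x' hxx')

lemma exists_lt_le_le_add_one {t : ℝ} {n : ℕ} (ht0 : 0 ≤ t) (htn : t ≤ n) (hn : 0 < n) :
    ∃ k < n, (k : ℝ) ≤ t ∧ t ≤ k + 1 := by
  rcases htn.lt_or_eq with htn | rfl
  · exact ⟨⌊t⌋₊, (Nat.floor_lt ht0).2 htn, Nat.floor_le ht0, (Nat.lt_floor_add_one t).le⟩
  · exact ⟨n - 1, Nat.sub_lt hn one_pos, by exact_mod_cast n.sub_le 1,
      by rw [Nat.cast_pred hn, sub_add_cancel]⟩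

lemma exists_abs_sub_midpoint_le {a b d : ℝ} (hd : d ∈ uIcc a b) {n : ℕ} (hn : 0 < n) :
    ∃ k < n, |d - (a + (2 * k + 1) / (2 * n) * (b - a))| ≤ |b - a| / (2 * n) := by
  rw [← segment_eq_uIcc, segment_eq_image'] at hd
  obtain ⟨s, ⟨hs0, hs1⟩, rfl⟩ := hd
  have hn' : (0 : ℝ) < n := by exact_mod_cast hn
  obtain ⟨k, hk, hks, hsk⟩ := exists_lt_le_le_add_one (mul_nonneg hs0 hn'.le)
    (mul_le_of_le_one_left hn'.le hs1) hn
  refine ⟨k, hk, ?_⟩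
  have heq : a + s • (b - a) - (a + (2 * k + 1) / (2 * n) * (b - a))
      = (2 * (s * n) - 2 * k - 1) * (b - a) / (2 * n) := by
    rw [smul_eq_mul]; field_simp; ring
  rw [heq, abs_div, abs_mul, abs_of_pos (by positivity : (0 : ℝ) < 2 * n)]
  gcongr
  exact mul_le_of_le_one_left (abs_nonneg _) (abs_le.2 ⟨by linarith, by linarith⟩)

/-- The band is covered by `n > δ` slabs of half-width `δ / n < 1` around convex combinations
of `z` and `z'`, each of which the density hypothesis controls. -/
lemma measureReal_setOf_mem_uIcc_le {α : Type*} [MeasurableSpace α] {μ : Measure α}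
    [IsFiniteMeasure μ] {𝓕 : Set (α → ℝ)} (h𝓕 : Convex ℝ 𝓕) {D z z' : α → ℝ}
    (hz : z ∈ 𝓕) (hz' : z' ∈ 𝓕) {CK δ : ℝ} (hδ : 0 < δ) (hzz' : ∀ x, |z x - z' x| ≤ 2 * δ)
    (hD : ∀ f ∈ 𝓕, ∀ ε ∈ Ioo (0 : ℝ) 1, μ.real {x | |D x - f x| ≤ ε} ≤ CK * ε) :
    μ.real {x | D x ∈ uIcc (z x) (z' x)} ≤ CK * δ := by
  obtain ⟨n, hδn⟩ := exists_nat_gt δ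
  have hn' : (0 : ℝ) < n := hδ.trans hδn
  have hn : 0 < n := by exact_mod_cast hn'
  set ε := δ / n with hε_def
  have hε : ε ∈ Ioo (0 : ℝ) 1 := ⟨div_pos hδ hn', (div_lt_one hn').2 hδn⟩
  set t : ℕ → ℝ := fun k => (2 * k + 1) / (2 * n)
  have hmem : ∀ k ∈ Finset.range n, z + t k • (z' - z) ∈ 𝓕 := fun k hk =>
    h𝓕.add_smul_sub_mem hz hz' ⟨by positivity, (div_le_one (by positivity)).2 (by
      have : (k : ℝ) + 1 ≤ n := by exact_mod_cast Finset.mem_range.1 hk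
      linarith)⟩
  have hcover : {x | D x ∈ uIcc (z x) (z' x)}
      ⊆ ⋃ k ∈ Finset.range n, {x | |D x - (z + t k • (z' - z)) x| ≤ ε} := by
    intro x hx
    obtain ⟨k, hk, hdk⟩ := exists_abs_sub_midpoint_le hx hn
    refine mem_biUnion (Finset.mem_range.2 hk) (hdk.trans ?_)
    rw [abs_sub_comm, hε_def, div_le_div_iff₀ (by positivity) hn']
    nlinarith [hzz' x]
  calc μ.real {x | D x ∈ uIcc (z x) (z' x)}
      ≤ ∑ k ∈ Finset.range n, μ.real {x | |D x - (z + t k • (z' - z)) x| ≤ ε} :=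
        (measureReal_mono hcover (measure_ne_top _ _)).trans (measureReal_biUnion_finset_le _ _)
    _ ≤ ∑ _k ∈ Finset.range n, CK * ε := Finset.sum_le_sum fun k hk => hD _ (hmem k hk) ε hε
    _ = CK * δ := by rw [Finset.sum_const, Finset.card_range, nsmul_eq_mul, hε_def]; field_simp

lemma abs_setIntegral_ite_sub_ite_le {α : Type*} [MeasurableSpace α] {μ : Measure α}
    [IsFiniteMeasure μ] {p q : α → Prop} [DecidablePred p] [DecidablePred q]
    (hp : MeasurableSet {x | p x}) (hq : MeasurableSet {x | q x}) (S : Set α) (a b : ℝ) :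
    |(∫ x in S, (if p x then a else b) ∂μ) - ∫ x in S, (if q x then a else b) ∂μ|
      ≤ |a - b| * μ.real {x | ¬(p x ↔ q x)} := by
  have hite : ∀ {r : α → Prop} [DecidablePred r], MeasurableSet {x | r x} →
      Integrable (fun x => if r x then a else b) (μ.restrict S) := fun hr =>
    Integrable.of_bound (μ := μ.restrict S)
      (Measurable.ite hr measurable_const measurable_const).aestronglyMeasurable (max |a| |b|)
      (.of_forall fun x => by split_ifs <;> simp)
  have hE : MeasurableSet {x | ¬(p x ↔ q x)} :=
    ((measurableSet_setOfPred.1 hp).iff (measurableSet_setOfPred.1 hq)).not.setOf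
  rw [← integral_sub (hite hp) (hite hq)]
  calc |∫ x in S, ((if p x then a else b) - if q x then a else b) ∂μ|
      ≤ ∫ x in S, {x | ¬(p x ↔ q x)}.indicator (fun _ => |a - b|) x ∂μ := by
        rw [← Real.norm_eq_abs]
        refine norm_integral_le_of_norm_le
          ((integrable_const (μ := μ.restrict S) _).indicator hE) (.of_forall fun x => ?_)
        by_cases hpx : p x <;> by_cases hqx : q x <;> simp [hpx, hqx, abs_sub_comm]
    _ = |a - b| * μ.real ({x | ¬(p x ↔ q x)} ∩ S) := by
        rw [integral_indicator_const _ hE, measureReal_restrict_apply hE, smul_eq_mul, mul_comm]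
    _ ≤ |a - b| * μ.real {x | ¬(p x ↔ q x)} :=
        mul_le_mul_of_nonneg_left (measureReal_mono inter_subset_left) (abs_nonneg _)

theorem stmt16_general (N M : ℕ) (hM : 2 ≤ M) (R : ℝ) [Fact (0 < R)]
    (𝒩 : Set (Fin N → AddCircle R))
    (B : (Fin N → AddCircle R) → Fin M → ℝ) (hB : Continuous B)
    (K : ℝ) (CK : ℝ)
    (hCK : ∀ m1 m2 : Fin M, m1 ≠ m2 → ∀ f : (Fin N → AddCircle R) → ℝ,
      MemLKTorus N R (2 * K) f → ∀ ε ∈ Set.Ioo (0 : ℝ) 1,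
        (volume {x : Fin N → AddCircle R |
          |(B x m1 - B x m2) - f x| ≤ ε}).toReal ≤ CK * ε) :
    ∀ y ytil : (Fin N → AddCircle R) → Fin M → ℝ,
      (∀ m : Fin M, MemLKTorus N R K fun x => y x m) →
      (∀ m : Fin M, MemLKTorus N R K fun x => ytil x m) →
      ∀ δ : ℝ, 0 < δ → (∀ x m, |y x m - ytil x m| ≤ δ) →
      ∀ m : Fin M, ∀ x : Fin N → AddCircle R,
        |(∫ x' in {z : Fin N → AddCircle R | z - x ∈ 𝒩},
            (if plur (fun m' => B x' m' + y x' m') = some m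
              then 1 - (M : ℝ)⁻¹ else -(M : ℝ)⁻¹)) -
          (∫ x' in {z : Fin N → AddCircle R | z - x ∈ 𝒩},
            (if plur (fun m' => B x' m' + ytil x' m') = some m
              then 1 - (M : ℝ)⁻¹ else -(M : ℝ)⁻¹))| ≤
        2 * M * (M - 1) * CK * δ := by
  intro y ytil hy hytil δ hδ hclose m x
  have hplur : ∀ w : (Fin N → AddCircle R) → Fin M → ℝ, (∀ i, MemLKTorus N R K fun x => w x i) →
      MeasurableSet {x' | plur (fun i => B x' i + w x' i) = some m} := fun w hw =>
    measurableSet_plur_eq_some (hB.measurable.add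
      (measurable_pi_lambda _ fun i => (hw i).continuous.measurable)) m
  have hband : ∀ m' ≠ m, volume.real {x' | B x' m - B x' m' ∈
      uIcc (y x' m' - y x' m) (ytil x' m' - ytil x' m)} ≤ CK * δ := fun m' hm' =>
    measureReal_setOf_mem_uIcc_le (convex_setOf_memLKTorus N R (2 * K))
      (two_mul K ▸ (hy m').sub (hy m)) (two_mul K ▸ (hytil m').sub (hytil m)) hδ
      (fun x' => by
        have h' := abs_le.1 (hclose x' m')
        have h := abs_le.1 (hclose x' m)
        exact abs_le.2 ⟨by linarith, by linarith⟩)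
      (hCK m m' hm'.symm)
  have : Nontrivial (Fin M) := Fin.nontrivial_iff_two_le.2 hM
  obtain ⟨m', hm'⟩ := exists_ne m
  have hCKδ : 0 ≤ CK * δ := measureReal_nonneg.trans (hband m' hm')
  calc _ ≤ |(1 - (M : ℝ)⁻¹) - -(M : ℝ)⁻¹| * volume.real {x' | ¬(plur (fun i => B x' i + y x' i)
        = some m ↔ plur (fun i => B x' i + ytil x' i) = some m)} :=
        abs_setIntegral_ite_sub_ite_le (hplur y hy) (hplur ytil hytil) _ _ _
    _ ≤ ∑ _m' ∈ Finset.univ.erase m, CK * δ := by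
        rw [sub_neg_eq_add, sub_add_cancel, abs_one, one_mul]
        exact (measureReal_mono (setOf_not_iff_plur_subset B y ytil m) (measure_ne_top _ _)).trans
          ((measureReal_biUnion_finset_le _ _).trans
            (Finset.sum_le_sum fun m' hm' => hband m' (Finset.ne_of_mem_erase hm')))
    _ ≤ 2 * M * (M - 1) * CK * δ := by
        rw [Finset.sum_const, Finset.card_erase_of_mem (Finset.mem_univ m), Finset.card_univ,
          Fintype.card_fin, nsmul_eq_mul, Nat.cast_pred (by omega)]
        have hM' : (2 : ℝ) ≤ M := by exact_mod_cast hM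
        nlinarith [mul_nonneg (mul_nonneg (by linarith : (0 : ℝ) ≤ M - 1)
          (by linarith : (0 : ℝ) ≤ 2 * M - 1)) hCKδ]

/-- If each difference `B_m - B_{m'}` has occupation density over `𝓛^{2K}` uniformly bounded by
`C_K` (i.e. `λ{x : |(B_m - B_{m'})(x) - f(x)| ≤ ε} ≤ C_K ε` for all `f ∈ 𝓛^{2K}`, `ε ∈ (0,1)`),
then the continuum Schelling drift map `φ^ω`, restricted to `𝓛^K_M`, is Lipschitz for the
supremum norm with constant at most `2M(M-1)C_K`. -/
theorem stmt16 (N M : ℕ) (hM : 2 ≤ M) (R : ℝ) [Fact (0 < R)]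
    (𝒩 : Set (Fin N → AddCircle R)) (h𝒩 : MeasurableSet 𝒩)
    (B : (Fin N → AddCircle R) → Fin M → ℝ) (hB : Continuous B)
    (K : ℝ) (hK : 0 < K) (CK : ℝ)
    (hCK : ∀ m1 m2 : Fin M, m1 ≠ m2 → ∀ f : (Fin N → AddCircle R) → ℝ,
      MemLKTorus N R (2 * K) f → ∀ ε ∈ Set.Ioo (0 : ℝ) 1,
        (volume {x : Fin N → AddCircle R |
          |(B x m1 - B x m2) - f x| ≤ ε}).toReal ≤ CK * ε) :
    ∀ y ytil : (Fin N → AddCircle R) → Fin M → ℝ,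
      (∀ m : Fin M, MemLKTorus N R K fun x => y x m) →
      (∀ m : Fin M, MemLKTorus N R K fun x => ytil x m) →
      ∀ δ : ℝ, 0 < δ → (∀ x m, |y x m - ytil x m| ≤ δ) →
      ∀ m : Fin M, ∀ x : Fin N → AddCircle R,
        |(∫ x' in {z : Fin N → AddCircle R | z - x ∈ 𝒩},
            (if plur (fun m' => B x' m' + y x' m') = some m
              then 1 - (M : ℝ)⁻¹ else -(M : ℝ)⁻¹)) -
          (∫ x' in {z : Fin N → AddCircle R | z - x ∈ 𝒩},
            (if plur (fun m' => B x' m' + ytil x' m') = some m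
              then 1 - (M : ℝ)⁻¹ else -(M : ℝ)⁻¹))| ≤
        2 * M * (M - 1) * CK * δ :=
  stmt16_general N M hM R 𝒩 B hB K CK hCK
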